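/- For an n×n matrix M (entries in an integral domain, n ≥ 3), the three identities obtained from the column expansion formula for k = 3 all hold; in particular det(M)·det(M_{123,123}) = det(M_{1,1})det(M_{23,23}) − det(M_{2,1})det(M_{13,23}) + det(M_{3,1})det(M_{12,23}), and also det(M)·det(M_{123,123}) = −det(M_{1,2})det(M_{23,13}) + det(M_{2,2})det(M_{13,13}) − det(M_{3,2})det(M_{12,13}), and det(M)·det(M_{123,123}) = det(M_{1,3})det(M_{23,12}) − det(M_{2,3})det(M_{13,12}) + det(M_{3,3})det(M_{12,12}). -/

import Mathlib

/-!
Write the matrix in block form with `D` the lower right block on the indices `k, …, n - 1`.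
When `D` is invertible, Schur's formula turns the determinant of every minor that keeps all
of `D` into `det D` times the corresponding minor of the Schur complement `S = A - B D⁻¹ C`,
so the identity becomes `det D ^ 2` times the Laplace expansion of `det S` along column `j`.
Both sides are polynomials in the entries, so the general case follows from the generic
matrix over `ℤ[x_pq]`, whose block `D` has nonzero determinant in the fraction field.
-/

open Finset

/-- Determinant of the minor of the `ℕ`-indexed matrix `M` obtained by restricting to
rows `{0,...,n-1} \ I` and columns `{0,...,n-1} \ J` (in increasing order). -/
noncomputable def minorDet {R : Type*} [CommRing R] (M : Matrix ℕ ℕ R) (n : ℕ)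
    (I J : Finset ℕ) : R :=
  if h : (Finset.range n \ J).card = (Finset.range n \ I).card then
    Matrix.det (Matrix.of fun i j : Fin (Finset.range n \ I).card =>
      M (((Finset.range n \ I).orderIsoOfFin rfl i : ℕ))
        (((Finset.range n \ J).orderIsoOfFin h j : ℕ)))
  else 0

open Matrix

section BlockExpansion

variable {R : Type*} [CommRing R] {m : Type*} [Fintype m] [DecidableEq m] {k : ℕ}

theorem det_submatrix_sumMap_eq_det_mul_det_schur (X : Matrix (Fin k ⊕ m) (Fin k ⊕ m) R)
    [Invertible (X.submatrix Sum.inr Sum.inr)] {p : ℕ} (a b : Fin p → Fin k) :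
    (X.submatrix (Sum.map a id) (Sum.map b id)).det = (X.submatrix Sum.inr Sum.inr).det *
      ((X.submatrix Sum.inl Sum.inl - X.submatrix Sum.inl Sum.inr *
        ⅟(X.submatrix Sum.inr Sum.inr) * X.submatrix Sum.inr Sum.inl).submatrix a b).det := by
  have hblocks : X.submatrix (Sum.map a id) (Sum.map b id) =
      fromBlocks (X.submatrix (Sum.inl ∘ a) (Sum.inl ∘ b)) (X.submatrix (Sum.inl ∘ a) Sum.inr)
        (X.submatrix Sum.inr (Sum.inl ∘ b)) (X.submatrix Sum.inr Sum.inr) := by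
    ext (i | i) (j | j) <;> rfl
  rw [hblocks, det_fromBlocks₂₂]
  rfl

theorem det_mul_det_submatrix_inr_eq_sum_of_invertible
    (X : Matrix (Fin (k + 1) ⊕ m) (Fin (k + 1) ⊕ m) R)
    [Invertible (X.submatrix Sum.inr Sum.inr)] (j : Fin (k + 1)) :
    X.det * (X.submatrix Sum.inr Sum.inr).det = ∑ i : Fin (k + 1), (-1) ^ (i + j : ℕ) *
      (X.submatrix (Sum.map i.succAbove id) (Sum.map j.succAbove id)).det *
      (X.submatrix (Sum.map (fun _ : Fin 1 => i) id) (Sum.map (fun _ : Fin 1 => j) id)).det := by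
  have hX : X.det = (X.submatrix (Sum.map id id) (Sum.map id id)).det := by
    simp only [Sum.map_id_id, submatrix_id_id]
  simp only [hX, det_submatrix_sumMap_eq_det_mul_det_schur, submatrix_id_id, det_unique,
    submatrix_apply, det_succ_column _ j, Finset.mul_sum, Finset.sum_mul]
  refine Finset.sum_congr rfl fun i _ => ?_
  ring

theorem det_mul_det_submatrix_inr_eq_sum_of_det_ne_zero [IsDomain R]
    (X : Matrix (Fin (k + 1) ⊕ m) (Fin (k + 1) ⊕ m) R)
    (hD : (X.submatrix Sum.inr Sum.inr).det ≠ 0) (j : Fin (k + 1)) :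
    X.det * (X.submatrix Sum.inr Sum.inr).det = ∑ i : Fin (k + 1), (-1) ^ (i + j : ℕ) *
      (X.submatrix (Sum.map i.succAbove id) (Sum.map j.succAbove id)).det *
      (X.submatrix (Sum.map (fun _ : Fin 1 => i) id) (Sum.map (fun _ : Fin 1 => j) id)).det := by
  let φ := algebraMap R (FractionRing R)
  have hφ : Function.Injective φ := IsFractionRing.injective R (FractionRing R)
  have hunit : IsUnit ((X.map φ).submatrix Sum.inr Sum.inr).det := by
    rw [submatrix_map, ← RingHom.mapMatrix_apply, ← RingHom.map_det, isUnit_iff_ne_zero,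
      map_ne_zero_iff _ hφ]
    exact hD
  have := invertibleOfIsUnitDet _ hunit
  apply hφ
  simpa only [map_sum, map_mul, map_pow, map_neg, map_one, RingHom.map_det,
    RingHom.mapMatrix_apply, ← submatrix_map] using
    det_mul_det_submatrix_inr_eq_sum_of_invertible (X.map φ) j

theorem det_mvPolynomialX_submatrix_inr_ne_zero {l : Type*} :
    ((mvPolynomialX (l ⊕ m) (l ⊕ m) ℤ).submatrix Sum.inr Sum.inr).det ≠ 0 := by
  have hrename : (mvPolynomialX (l ⊕ m) (l ⊕ m) ℤ).submatrix Sum.inr Sum.inr =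
      (MvPolynomial.rename (Prod.map Sum.inr Sum.inr)).toRingHom.mapMatrix
        (mvPolynomialX m m ℤ) := by
    ext i j
    simp
  rw [hrename, ← RingHom.map_det]
  exact (map_ne_zero_iff _ (MvPolynomial.rename_injective _
    (Sum.inr_injective.prodMap Sum.inr_injective))).2 (det_mvPolynomialX_ne_zero m ℤ)

theorem det_mul_det_submatrix_inr_eq_sum (X : Matrix (Fin (k + 1) ⊕ m) (Fin (k + 1) ⊕ m) R)
    (j : Fin (k + 1)) :
    X.det * (X.submatrix Sum.inr Sum.inr).det = ∑ i : Fin (k + 1), (-1) ^ (i + j : ℕ) *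
      (X.submatrix (Sum.map i.succAbove id) (Sum.map j.succAbove id)).det *
      (X.submatrix (Sum.map (fun _ : Fin 1 => i) id) (Sum.map (fun _ : Fin 1 => j) id)).det := by
  have hgeneric := det_mul_det_submatrix_inr_eq_sum_of_det_ne_zero
    (mvPolynomialX (Fin (k + 1) ⊕ m) (Fin (k + 1) ⊕ m) ℤ)
    det_mvPolynomialX_submatrix_inr_ne_zero j
  simpa only [map_sum, map_mul, map_pow, map_neg, map_one, RingHom.map_det,
    RingHom.mapMatrix_apply, ← submatrix_map, MvPolynomial.coe_eval₂Hom,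
    mvPolynomialX_map_eval₂] using congrArg (MvPolynomial.eval₂Hom (Int.castRingHom R)
      fun p : (Fin (k + 1) ⊕ m) × (Fin (k + 1) ⊕ m) => X p.1 p.2) hgeneric

end BlockExpansion

section MinorDet

variable {R : Type*} [CommRing R]

theorem minorDet_eq_det_submatrix (M : Matrix ℕ ℕ R) {n d : ℕ} {I J : Finset ℕ}
    {f g : Fin d → ℕ} (hf : StrictMono f) (hg : StrictMono g)
    (hfI : ∀ i, f i ∈ range n \ I) (hgJ : ∀ i, g i ∈ range n \ J)
    (hI : #(range n \ I) = d) (hJ : #(range n \ J) = d) :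
    minorDet M n I J = (M.submatrix f g).det := by
  subst hI
  rw [orderEmbOfFin_unique rfl hfI hf, orderEmbOfFin_unique hJ hgJ hg, minorDet, dif_pos hJ]
  rfl

theorem strictMono_append_add {p m k : ℕ} {a : Fin p → ℕ} (ha : StrictMono a)
    (hak : ∀ i, a i < k) : StrictMono (Fin.append a fun j : Fin m => k + j) := by
  intro x y hxy
  induction x using Fin.addCases <;> induction y using Fin.addCases <;>
    simp only [Fin.append_left, Fin.append_right]
  · exact ha (by rwa [Fin.lt_def, Fin.val_castAdd, Fin.val_castAdd, ← Fin.lt_def] at hxy)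
  · exact (hak _).trans_le (Nat.le_add_right _ _)
  · rw [Fin.lt_def, Fin.val_castAdd, Fin.val_natAdd] at hxy
    omega
  · exact Nat.add_lt_add_left ((Fin.natAdd_lt_natAdd_iff _).1 hxy) k

theorem append_add_mem_range_sdiff {p m k : ℕ} {I : Finset ℕ} {a : Fin p → ℕ}
    (haI : ∀ i, a i ∈ range k \ I) (hI : I ⊆ range k) (x : Fin (p + m)) :
    Fin.append a (fun j : Fin m => k + j) x ∈ range (k + m) \ I := by
  induction x using Fin.addCases with
  | left i =>
    have := haI i
    simp only [mem_sdiff, mem_range, Fin.append_left] at this ⊢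
    exact ⟨by omega, this.2⟩
  | right j =>
    simp only [mem_sdiff, mem_range, Fin.append_right]
    exact ⟨by omega, fun hj => by have := mem_range.1 (hI hj); omega⟩

theorem card_range_add_sdiff {p m k : ℕ} {I : Finset ℕ} (hI : I ⊆ range k)
    (hIcard : #I + p = k) : #(range (k + m) \ I) = p + m := by
  rw [card_sdiff_of_subset (hI.trans (range_subset_range.2 (Nat.le_add_right k m))),
    card_range]
  omega

def blockIndex (k m : ℕ) : Fin k ⊕ Fin m → ℕ := Sum.elim Fin.val fun j => k + j

theorem minorDet_eq_det_submatrix_sumMap (M : Matrix ℕ ℕ R) {k m p : ℕ} {I J : Finset ℕ}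
    {a b : Fin p → Fin k} (ha : StrictMono a) (hb : StrictMono b)
    (haI : ∀ i, (a i : ℕ) ∉ I) (hbJ : ∀ i, (b i : ℕ) ∉ J)
    (hI : I ⊆ range k) (hJ : J ⊆ range k)
    (hIcard : #I + p = k) (hJcard : #J + p = k) :
    minorDet M (k + m) I J = ((M.submatrix (blockIndex k m) (blockIndex k m)).submatrix
      (Sum.map a id) (Sum.map b id)).det := by
  have hmem {c : Fin p → Fin k} {K : Finset ℕ} (hcK : ∀ i, (c i : ℕ) ∉ K) i :
      (c i : ℕ) ∈ range k \ K :=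
    mem_sdiff.2 ⟨mem_range.2 (c i).isLt, hcK i⟩
  rw [minorDet_eq_det_submatrix M
    (strictMono_append_add (Fin.val_strictMono.comp ha) fun i => (a i).isLt)
    (strictMono_append_add (Fin.val_strictMono.comp hb) fun i => (b i).isLt)
    (append_add_mem_range_sdiff (hmem haI) hI) (append_add_mem_range_sdiff (hmem hbJ) hJ)
    (card_range_add_sdiff hI hIcard) (card_range_add_sdiff hJ hJcard),
    ← det_submatrix_equiv_self finSumFinEquiv]
  congr 1
  ext (i | i) (j | j) <;> simp [blockIndex]

section Blocks

variable (M : Matrix ℕ ℕ R) (k m : ℕ)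

theorem minorDet_empty_eq_det :
    minorDet M (k + m) ∅ ∅ = (M.submatrix (blockIndex k m) (blockIndex k m)).det := by
  rw [minorDet_eq_det_submatrix_sumMap M (a := id) (b := id) strictMono_id strictMono_id
    (fun _ => notMem_empty _) (fun _ => notMem_empty _) (empty_subset _) (empty_subset _)
    (by simp) (by simp)]
  simp

theorem minorDet_range_eq_det :
    minorDet M (k + m) (range k) (range k) =
      ((M.submatrix (blockIndex k m) (blockIndex k m)).submatrix Sum.inr Sum.inr).det := by
  have hmono : StrictMono fun j : Fin m => k + (j : ℕ) :=
    fun _ _ h => Nat.add_lt_add_left h k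
  have hmem (j : Fin m) : k + (j : ℕ) ∈ range (k + m) \ range k := by
    simp only [mem_sdiff, mem_range]
    omega
  have hcard : #(range (k + m) \ range k) = m := by
    rw [card_range_add_sdiff (p := 0) subset_rfl (by simp), zero_add]
  exact minorDet_eq_det_submatrix M hmono hmono hmem hmem hcard hcard

theorem minorDet_singleton_eq_det (i j : Fin (k + 1)) :
    minorDet M (k + 1 + m) {(i : ℕ)} {(j : ℕ)} =
      ((M.submatrix (blockIndex (k + 1) m) (blockIndex (k + 1) m)).submatrix
        (Sum.map i.succAbove id) (Sum.map j.succAbove id)).det := by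
  refine minorDet_eq_det_submatrix_sumMap M (Fin.strictMono_succAbove i)
    (Fin.strictMono_succAbove j) ?_ ?_ ?_ ?_ (by simp [add_comm]) (by simp [add_comm]) <;>
  simp [Fin.val_eq_val, Fin.succAbove_ne, Fin.is_le]

theorem minorDet_range_sdiff_singleton_eq_det (i j : Fin (k + 1)) :
    minorDet M (k + 1 + m) (range (k + 1) \ {(i : ℕ)}) (range (k + 1) \ {(j : ℕ)}) =
      ((M.submatrix (blockIndex (k + 1) m) (blockIndex (k + 1) m)).submatrix
        (Sum.map (fun _ : Fin 1 => i) id) (Sum.map (fun _ : Fin 1 => j) id)).det := by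
  refine minorDet_eq_det_submatrix_sumMap M (Subsingleton.strictMono _)
    (Subsingleton.strictMono _) ?_ ?_ sdiff_subset sdiff_subset ?_ ?_ <;>
  simp [card_sdiff_of_subset (singleton_subset_iff.2 (mem_range.2 (Fin.is_lt _)))]

end Blocks

theorem minorDet_column_expansion (M : Matrix ℕ ℕ R) {k n : ℕ} (hkn : k ≤ n) {j : ℕ}
    (hj : j < k) :
    minorDet M n ∅ ∅ * minorDet M n (range k) (range k) = ∑ i ∈ range k, (-1) ^ (i + j) *
      minorDet M n {i} {j} * minorDet M n (range k \ {i}) (range k \ {j}) := by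
  obtain ⟨k, rfl⟩ : ∃ k', k = k' + 1 := ⟨k - 1, by omega⟩
  obtain ⟨m, rfl⟩ : ∃ m, n = k + 1 + m := ⟨n - (k + 1), by omega⟩
  obtain ⟨j, rfl⟩ : ∃ j' : Fin (k + 1), j = j' := ⟨⟨j, hj⟩, rfl⟩
  rw [minorDet_empty_eq_det, minorDet_range_eq_det, det_mul_det_submatrix_inr_eq_sum _ j,
    ← Fin.sum_univ_eq_sum_range]
  simp only [minorDet_singleton_eq_det, minorDet_range_sdiff_singleton_eq_det]

end MinorDet

theorem column_expansion_k3_general {R : Type*} [CommRing R] (n : ℕ) (hn : 3 ≤ n)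
    (M : Matrix ℕ ℕ R) :
    (minorDet M n ∅ ∅ * minorDet M n {0, 1, 2} {0, 1, 2} =
        minorDet M n {0} {0} * minorDet M n {1, 2} {1, 2} -
          minorDet M n {1} {0} * minorDet M n {0, 2} {1, 2} +
            minorDet M n {2} {0} * minorDet M n {0, 1} {1, 2}) ∧
      (minorDet M n ∅ ∅ * minorDet M n {0, 1, 2} {0, 1, 2} =
        -(minorDet M n {0} {1} * minorDet M n {1, 2} {0, 2}) +
          minorDet M n {1} {1} * minorDet M n {0, 2} {0, 2} -
            minorDet M n {2} {1} * minorDet M n {0, 1} {0, 2}) ∧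
      (minorDet M n ∅ ∅ * minorDet M n {0, 1, 2} {0, 1, 2} =
        minorDet M n {0} {2} * minorDet M n {1, 2} {0, 1} -
          minorDet M n {1} {2} * minorDet M n {0, 2} {0, 1} +
            minorDet M n {2} {2} * minorDet M n {0, 1} {0, 1}) := by
  have hrange : range 3 = {0, 1, 2} := by decide
  have h0 : ({0, 1, 2} \ {0} : Finset ℕ) = {1, 2} := by decide
  have h1 : ({0, 1, 2} \ {1} : Finset ℕ) = {0, 2} := by decide
  have h2 : ({0, 1, 2} \ {2} : Finset ℕ) = {0, 1} := by decide
  have expansion (j : ℕ) (hj : j < 3) := minorDet_column_expansion M hn hj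
  simp only [sum_range_succ, sum_range_zero, zero_add] at expansion
  simp only [hrange, h0, h1, h2] at expansion
  refine ⟨?_, ?_, ?_⟩
  · rw [expansion 0 (by norm_num), h0]
    ring
  · rw [expansion 1 (by norm_num), h1]
    ring
  · rw [expansion 2 (by norm_num), h2]
    ring

/-- The three column expansion identities for `k = 3` (rows/columns `1,2,3` of the paper
are indices `0,1,2` here), for an `n × n` matrix over an integral domain with `n ≥ 3`. -/
theorem column_expansion_k3 {R : Type*} [CommRing R] [IsDomain R] (n : ℕ) (hn : 3 ≤ n)
    (M : Matrix ℕ ℕ R) :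
    (minorDet M n ∅ ∅ * minorDet M n {0, 1, 2} {0, 1, 2} =
        minorDet M n {0} {0} * minorDet M n {1, 2} {1, 2} -
          minorDet M n {1} {0} * minorDet M n {0, 2} {1, 2} +
            minorDet M n {2} {0} * minorDet M n {0, 1} {1, 2}) ∧
      (minorDet M n ∅ ∅ * minorDet M n {0, 1, 2} {0, 1, 2} =
        -(minorDet M n {0} {1} * minorDet M n {1, 2} {0, 2}) +
          minorDet M n {1} {1} * minorDet M n {0, 2} {0, 2} -
            minorDet M n {2} {1} * minorDet M n {0, 1} {0, 2}) ∧
      (minorDet M n ∅ ∅ * minorDet M n {0, 1, 2} {0, 1, 2} =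
        minorDet M n {0} {2} * minorDet M n {1, 2} {0, 1} -
          minorDet M n {1} {2} * minorDet M n {0, 2} {0, 1} +
            minorDet M n {2} {2} * minorDet M n {0, 1} {0, 1}) :=
  column_expansion_k3_general n hn M
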